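/- Completeness of S4.2: with countable sets of propositional symbols and agent labels, every formula φ that is valid in all Kripke models based on weakly directed preorders (i.e., M, w ⊨ φ for every such model M and every world w) is a theorem of S4.2. -/

import Mathlib

/-- Formulas of multi-agent modal logic: ⊥, variables, ∨, ∧, →, K_i. -/
inductive Form (α P : Type) : Type
  | fls : Form α P
  | var : P → Form α P
  | dis : Form α P → Form α P → Form α P
  | con : Form α P → Form α P → Form α P
  | imp : Form α P → Form α P → Form α P
  | box : α → Form α P → Form α P

namespace Form

/-- Negation ¬φ := φ → ⊥. -/
def neg {α P : Type} (p : Form α P) : Form α P := p.imp .fls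

/-- Verum ⊤ := ¬⊥. -/
def top {α P : Type} : Form α P := neg .fls

/-- Biconditional φ ↔ ψ := (φ → ψ) ∧ (ψ → φ). -/
def iff' {α P : Type} (p q : Form α P) : Form α P := (p.imp q).con (q.imp p)

/-- Dual operator L_i φ := ¬ K_i ¬ φ. -/
def dia {α P : Type} (i : α) (p : Form α P) : Form α P := (Form.box i p.neg).neg

end Form

/-- Boolean evaluation of a formula, treating modal subformulas as atoms
(interpreted by `h`). -/
def beval {α P : Type} (g : P → Bool) (h : Form α P → Bool) : Form α P → Bool
  | .fls => false
  | .var x => g x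
  | .dis p q => beval g h p || beval g h q
  | .con p q => beval g h p && beval g h q
  | .imp p q => !(beval g h p) || beval g h q
  | .box i p => h (.box i p)

/-- A propositional tautology: true under every valuation of the variables and
of the modal subformulas. -/
def Tautology {α P : Type} (p : Form α P) : Prop := ∀ g h, beval g h p = true

/-- Hilbert system K + the axiom set `Ax`: all propositional tautologies,
axiom K, the extra axioms, closed under Modus Ponens and Necessitation. -/
inductive Prf {α P : Type} (Ax : Form α P → Prop) : Form α P → Prop
  | taut {p} : Tautology p → Prf Ax p
  | axK {i p q} : Prf Ax (((Form.box i (p.imp q)).con (Form.box i p)).imp (Form.box i q))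
  | ax {p} : Ax p → Prf Ax p
  | mp {p q} : Prf Ax (p.imp q) → Prf Ax p → Prf Ax q
  | nec {i p} : Prf Ax p → Prf Ax (Form.box i p)

/-- The empty axiom set: `Prf KAx` is the pure system K. -/
def KAx {α P : Type} : Form α P → Prop := fun _ => False

/-- Axiom T: K_i φ → φ. -/
def AxT {α P : Type} (φ : Form α P) : Prop := ∃ i p, φ = (Form.box i p).imp p

/-- Axiom 4: K_i φ → K_i K_i φ. -/
def Ax4 {α P : Type} (φ : Form α P) : Prop :=
  ∃ i p, φ = (Form.box i p).imp (Form.box i (Form.box i p))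

/-- Axiom .2: ¬K_i ¬K_i φ → K_i ¬K_i ¬φ. -/
def Ax2 {α P : Type} (φ : Form α P) : Prop :=
  ∃ i p, φ = ((Form.box i (Form.box i p).neg).neg).imp (Form.box i (Form.box i p.neg).neg)

/-- Axioms of S4: T and 4. -/
def AxS4 {α P : Type} (φ : Form α P) : Prop := AxT φ ∨ Ax4 φ

/-- Axioms of S4.2: T, 4 and .2. -/
def AxS42 {α P : Type} (φ : Form α P) : Prop := AxT φ ∨ Ax4 φ ∨ Ax2 φ

/-- Iterated implication ψ₁ → (ψ₂ → … (ψ_k → φ)…); for the empty list it is φ. -/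
def imply {α P : Type} : List (Form α P) → Form α P → Form α P
  | [], q => q
  | p :: l, q => p.imp (imply l q)

/-- Conjunction ψ₁ ∧ … ∧ ψ_k (∧ ⊤); for the empty list it is ⊤. -/
def conj {α P : Type} : List (Form α P) → Form α P
  | [] => Form.top
  | p :: l => p.con (conj l)

/-- A set Γ is consistent w.r.t. K+Ax if no finite list of its elements derives ⊥. -/
def Consistent {α P : Type} (Ax : Form α P → Prop) (Γ : Set (Form α P)) : Prop :=
  ¬ ∃ l : List (Form α P), (∀ ψ ∈ l, ψ ∈ Γ) ∧ Prf Ax (imply l Form.fls)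

/-- Γ is maximal consistent if it is consistent and contains φ or ¬φ for every φ. -/
def MaximalConsistent {α P : Type} (Ax : Form α P → Prop) (Γ : Set (Form α P)) : Prop :=
  Consistent Ax Γ ∧ ∀ φ : Form α P, φ ∈ Γ ∨ Form.neg φ ∈ Γ

/-- A Kripke model: a valuation and one accessibility relation per agent. -/
structure Kripke (α P W : Type) where
  val : W → P → Prop
  rel : α → W → W → Prop

/-- Satisfaction of a formula at a world of a Kripke model. -/
def sat {α P W : Type} (M : Kripke α P W) : W → Form α P → Prop
  | _, .fls => False
  | w, .var x => M.val w x
  | w, .dis p q => sat M w p ∨ sat M w q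
  | w, .con p q => sat M w p ∧ sat M w q
  | w, .imp p q => sat M w p → sat M w q
  | w, .box i p => ∀ v, M.rel i w v → sat M v p

/-- A family of relations is weakly directed (confluent). -/
def WeaklyDirected {α W : Type} (R : α → W → W → Prop) : Prop :=
  ∀ i v w u, R i v w → R i v u → ∃ x, R i w x ∧ R i u x

/-- Each relation is reflexive. -/
def ReflexiveRel {α W : Type} (R : α → W → W → Prop) : Prop :=
  ∀ i w, R i w w

/-- Each relation is transitive. -/
def TransitiveRel {α W : Type} (R : α → W → W → Prop) : Prop :=
  ∀ i u v w, R i u v → R i v w → R i u w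

section Aux

open Classical

variable {α P : Type}

/-! ### Boolean evaluation lemmas -/

lemma beval_imp_true {g : P → Bool} {h : Form α P → Bool} {p q : Form α P} :
    beval g h (p.imp q) = true ↔ (beval g h p = true → beval g h q = true) := by
  cases hb : beval g h p <;> cases hc : beval g h q <;> simp [beval, hb, hc]

lemma beval_con_true {g : P → Bool} {h : Form α P → Bool} {p q : Form α P} :
    beval g h (p.con q) = true ↔ (beval g h p = true ∧ beval g h q = true) := by
  simp [beval]

lemma beval_dis_true {g : P → Bool} {h : Form α P → Bool} {p q : Form α P} :
    beval g h (p.dis q) = true ↔ (beval g h p = true ∨ beval g h q = true) := by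
  simp [beval]

lemma beval_fls_true {g : P → Bool} {h : Form α P → Bool} :
    beval g h (Form.fls : Form α P) = true ↔ False := by
  simp [beval]

lemma beval_conj_true {g : P → Bool} {h : Form α P → Bool} {l : List (Form α P)} :
    beval g h (conj l) = true ↔ ∀ x ∈ l, beval g h x = true := by
  induction l with
  | nil => simp [conj, Form.top, Form.neg, beval]
  | cons p l ih => simp [conj, beval_con_true, ih]

lemma beval_imply_true {g : P → Bool} {h : Form α P → Bool} {l : List (Form α P)}
    {q : Form α P} :
    beval g h (imply l q) = true ↔ ((∀ x ∈ l, beval g h x = true) → beval g h q = true) := by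
  induction l with
  | nil => simp [imply]
  | cons p l ih =>
    simp only [imply, beval_imp_true, ih, List.mem_cons]
    constructor
    · intro ha hb
      exact ha (hb p (Or.inl rfl)) (fun x hx => hb x (Or.inr hx))
    · intro ha hb hc
      refine ha fun x hx => ?_
      rcases hx with rfl | hx
      · exact hb
      · exact hc x hx

/-! ### Consequence from a set -/

variable {Ax : Form α P → Prop}

/-- `q` follows from finitely many members of `Γ` in the system `K + Ax`. -/
def Csq (Ax : Form α P → Prop) (Γ : Set (Form α P)) (q : Form α P) : Prop :=
  ∃ l : List (Form α P), (∀ ψ ∈ l, ψ ∈ Γ) ∧ Prf Ax ((conj l).imp q)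

lemma csq_of_prf {Γ : Set (Form α P)} {q : Form α P} (hq : Prf Ax q) : Csq Ax Γ q := by
  refine ⟨[], by simp, Prf.mp (Prf.taut ?_) hq⟩
  intro g h
  simp [beval_imp_true, beval_conj_true]

lemma csq_of_mem {Γ : Set (Form α P)} {q : Form α P} (hq : q ∈ Γ) : Csq Ax Γ q := by
  refine ⟨[q], by simpa using hq, Prf.taut ?_⟩
  intro g h
  simp [beval_imp_true, beval_conj_true]

lemma csq_mono {Γ Δ : Set (Form α P)} {q : Form α P} (hs : Γ ⊆ Δ) (hq : Csq Ax Γ q) :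
    Csq Ax Δ q := by
  obtain ⟨l, hl, hp⟩ := hq
  exact ⟨l, fun ψ hψ => hs (hl ψ hψ), hp⟩

lemma csq_mp {Γ : Set (Form α P)} {p q : Form α P}
    (h1 : Csq Ax Γ (p.imp q)) (h2 : Csq Ax Γ p) : Csq Ax Γ q := by
  obtain ⟨l1, hl1, hp1⟩ := h1
  obtain ⟨l2, hl2, hp2⟩ := h2
  refine ⟨l1 ++ l2, ?_, ?_⟩
  · intro ψ hψ
    rcases List.mem_append.mp hψ with h | h
    · exact hl1 ψ h
    · exact hl2 ψ h
  · have t : Tautology ((((conj l1).imp (p.imp q)).imp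
        (((conj l2).imp p).imp ((conj (l1 ++ l2)).imp q))) : Form α P) := by
      intro g h
      simp only [beval_imp_true, beval_conj_true, List.mem_append]
      intro ha hb hc
      exact ha (fun x hx => hc x (Or.inl hx)) (hb (fun x hx => hc x (Or.inr hx)))
    exact Prf.mp (Prf.mp (Prf.taut t) hp1) hp2

lemma consistent_iff {Γ : Set (Form α P)} :
    Consistent Ax Γ ↔ ¬ Csq Ax Γ Form.fls := by
  unfold Consistent Csq
  constructor
  · rintro h ⟨l, hl, hp⟩
    refine h ⟨l, hl, ?_⟩
    have t : Tautology ((((conj l).imp Form.fls).imp (imply l Form.fls)) : Form α P) := by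
      intro g hv
      simp only [beval_imp_true, beval_conj_true, beval_imply_true]
      tauto
    exact Prf.mp (Prf.taut t) hp
  · rintro h ⟨l, hl, hp⟩
    refine h ⟨l, hl, ?_⟩
    have t : Tautology (((imply l Form.fls).imp ((conj l).imp Form.fls)) : Form α P) := by
      intro g hv
      simp only [beval_imp_true, beval_conj_true, beval_imply_true]
      tauto
    exact Prf.mp (Prf.taut t) hp

lemma csq_deduction {Γ : Set (Form α P)} {p q : Form α P}
    (h : Csq Ax (insert p Γ) q) : Csq Ax Γ (p.imp q) := by
  obtain ⟨l, hl, hp⟩ := h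
  refine ⟨l.filter (fun x => decide (x ≠ p)), ?_, ?_⟩
  · intro ψ hψ
    have := List.mem_filter.mp hψ
    rcases hl ψ this.1 with h | h
    · exact absurd h (by simpa using this.2)
    · exact h
  · have t : Tautology ((((conj l).imp q).imp
        ((conj (l.filter (fun x => decide (x ≠ p)))).imp (p.imp q))) : Form α P) := by
      intro g hv
      simp only [beval_imp_true, beval_conj_true]
      intro ha hb hc
      refine ha (fun x hx => ?_)
      by_cases hxp : x = p
      · exact hxp ▸ hc
      · exact hb x (List.mem_filter.mpr ⟨hx, by simpa using hxp⟩)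
    exact Prf.mp (Prf.taut t) hp

/-! ### Maximal consistent sets -/

lemma mcs_mem_of_csq {Γ : Set (Form α P)} (hm : MaximalConsistent Ax Γ) {q : Form α P}
    (hq : Csq Ax Γ q) : q ∈ Γ := by
  by_contra hn
  rcases hm.2 q with h | h
  · exact hn h
  · have hneg : Csq Ax Γ q.neg := csq_of_mem h
    have t : Tautology ((q.imp (q.neg.imp Form.fls)) : Form α P) := by
      intro g hv
      simp only [Form.neg, beval_imp_true, beval_fls_true]
      tauto
    have : Csq Ax Γ Form.fls := csq_mp (csq_mp (csq_of_prf (Prf.taut t)) hq) hneg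
    exact (consistent_iff.mp hm.1) this

lemma mcs_mem_of_prf {Γ : Set (Form α P)} (hm : MaximalConsistent Ax Γ) {q : Form α P}
    (hq : Prf Ax q) : q ∈ Γ := mcs_mem_of_csq hm (csq_of_prf hq)

lemma mcs_mp {Γ : Set (Form α P)} (hm : MaximalConsistent Ax Γ) {p q : Form α P}
    (h1 : p.imp q ∈ Γ) (h2 : p ∈ Γ) : q ∈ Γ :=
  mcs_mem_of_csq hm (csq_mp (csq_of_mem h1) (csq_of_mem h2))

lemma mcs_not_both {Γ : Set (Form α P)} (hm : MaximalConsistent Ax Γ) {p : Form α P}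
    (h1 : p ∈ Γ) (h2 : p.neg ∈ Γ) : False := by
  have : Form.fls ∈ Γ := mcs_mp hm h2 h1
  have t : Tautology ((Form.fls.imp Form.fls) : Form α P) := by
    intro g hv; simp [beval_imp_true]
  refine (consistent_iff.mp hm.1) (csq_of_mem this)

lemma mcs_fls_not_mem {Γ : Set (Form α P)} (hm : MaximalConsistent Ax Γ) :
    (Form.fls : Form α P) ∉ Γ := fun h => (consistent_iff.mp hm.1) (csq_of_mem h)

lemma mcs_neg_mem_iff {Γ : Set (Form α P)} (hm : MaximalConsistent Ax Γ) {p : Form α P} :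
    p.neg ∈ Γ ↔ p ∉ Γ := by
  constructor
  · intro h1 h2; exact mcs_not_both hm h2 h1
  · intro h1; rcases hm.2 p with h | h
    · exact absurd h h1
    · exact h

lemma mcs_imp_mem_iff {Γ : Set (Form α P)} (hm : MaximalConsistent Ax Γ) {p q : Form α P} :
    p.imp q ∈ Γ ↔ (p ∈ Γ → q ∈ Γ) := by
  constructor
  · intro h hp; exact mcs_mp hm h hp
  · intro h
    by_cases hp : p ∈ Γ
    · have t : Tautology ((q.imp (p.imp q)) : Form α P) := by
        intro g hv; simp only [beval_imp_true]; tauto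
      exact mcs_mp hm (mcs_mem_of_prf hm (Prf.taut t)) (h hp)
    · have hn : p.neg ∈ Γ := (mcs_neg_mem_iff hm).mpr hp
      have t : Tautology ((p.neg.imp (p.imp q)) : Form α P) := by
        intro g hv
        simp only [Form.neg, beval_imp_true, beval_fls_true]
        tauto
      exact mcs_mp hm (mcs_mem_of_prf hm (Prf.taut t)) hn

lemma mcs_con_mem_iff {Γ : Set (Form α P)} (hm : MaximalConsistent Ax Γ) {p q : Form α P} :
    p.con q ∈ Γ ↔ (p ∈ Γ ∧ q ∈ Γ) := by
  constructor
  · intro h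
    constructor
    · have t : Tautology (((p.con q).imp p) : Form α P) := by
        intro g hv; simp only [beval_imp_true, beval_con_true]; tauto
      exact mcs_mp hm (mcs_mem_of_prf hm (Prf.taut t)) h
    · have t : Tautology (((p.con q).imp q) : Form α P) := by
        intro g hv; simp only [beval_imp_true, beval_con_true]; tauto
      exact mcs_mp hm (mcs_mem_of_prf hm (Prf.taut t)) h
  · rintro ⟨h1, h2⟩
    have t : Tautology ((p.imp (q.imp (p.con q))) : Form α P) := by
      intro g hv; simp only [beval_imp_true, beval_con_true]; tauto
    exact mcs_mp hm (mcs_mp hm (mcs_mem_of_prf hm (Prf.taut t)) h1) h2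

lemma mcs_dis_mem_iff {Γ : Set (Form α P)} (hm : MaximalConsistent Ax Γ) {p q : Form α P} :
    p.dis q ∈ Γ ↔ (p ∈ Γ ∨ q ∈ Γ) := by
  constructor
  · intro h
    by_contra hn
    push_neg at hn
    have h1 : p.neg ∈ Γ := (mcs_neg_mem_iff hm).mpr hn.1
    have h2 : q.neg ∈ Γ := (mcs_neg_mem_iff hm).mpr hn.2
    have t : Tautology (((p.dis q).imp (p.neg.imp (q.neg.imp Form.fls))) : Form α P) := by
      intro g hv
      simp only [Form.neg, beval_imp_true, beval_dis_true, beval_fls_true]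
      tauto
    have : Form.fls ∈ Γ :=
      mcs_mp hm (mcs_mp hm (mcs_mp hm (mcs_mem_of_prf hm (Prf.taut t)) h) h1) h2
    exact mcs_fls_not_mem hm this
  · intro h
    rcases h with h | h
    · have t : Tautology ((p.imp (p.dis q)) : Form α P) := by
        intro g hv; simp only [beval_imp_true, beval_dis_true]; tauto
      exact mcs_mp hm (mcs_mem_of_prf hm (Prf.taut t)) h
    · have t : Tautology ((q.imp (p.dis q)) : Form α P) := by
        intro g hv; simp only [beval_imp_true, beval_dis_true]; tauto
      exact mcs_mp hm (mcs_mem_of_prf hm (Prf.taut t)) h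

/-! ### Lindenbaum -/

lemma lindenbaum {Γ : Set (Form α P)} (hc : Consistent Ax Γ) :
    ∃ Δ : Set (Form α P), Γ ⊆ Δ ∧ MaximalConsistent Ax Δ := by
  have H : ∀ c ⊆ {Δ : Set (Form α P) | Consistent Ax Δ}, IsChain (· ⊆ ·) c →
      c.Nonempty → ∃ ub ∈ {Δ : Set (Form α P) | Consistent Ax Δ}, ∀ s ∈ c, s ⊆ ub := by
    intro c hcS hchain hcne
    refine ⟨⋃₀ c, ?_, fun s hs => Set.subset_sUnion_of_mem hs⟩
    rw [Set.mem_setOf_eq, consistent_iff]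
    rintro ⟨l, hl, hp⟩
    have : ∃ s ∈ c, ∀ ψ ∈ l, ψ ∈ s := by
      clear hp
      induction l with
      | nil => obtain ⟨s, hs⟩ := hcne; exact ⟨s, hs, by simp⟩
      | cons a l ih =>
        obtain ⟨s, hsc, hsl⟩ := ih (fun ψ hψ => hl ψ (List.mem_cons_of_mem _ hψ))
        obtain ⟨t, htc, hat⟩ := hl a List.mem_cons_self
        rcases hchain.total hsc htc with h | h
        · exact ⟨t, htc, fun ψ hψ => by
            rcases List.mem_cons.mp hψ with rfl | hψ
            · exact hat
            · exact h (hsl ψ hψ)⟩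
        · exact ⟨s, hsc, fun ψ hψ => by
            rcases List.mem_cons.mp hψ with rfl | hψ
            · exact h hat
            · exact hsl ψ hψ⟩
    obtain ⟨s, hsc, hsl⟩ := this
    exact (consistent_iff.mp (hcS hsc)) ⟨l, hsl, hp⟩
  obtain ⟨Δ, hΔsub, hΔmax⟩ := zorn_subset_nonempty
      {Δ : Set (Form α P) | Consistent Ax Δ} H Γ hc
  · have hΔmem : Consistent Ax Δ := hΔmax.1
    refine ⟨Δ, hΔsub, hΔmem, ?_⟩
    intro φ
    by_contra hn
    push_neg at hn
    have key : ∀ ψ : Form α P, ψ ∉ Δ → ¬ Consistent Ax (insert ψ Δ) := by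
      intro ψ hψ hcons
      have hsub : insert ψ Δ ⊆ Δ := hΔmax.2 hcons (Set.subset_insert _ _)
      exact hψ (hsub (Set.mem_insert _ _))
    have h1 : Csq Ax Δ (φ.imp Form.fls) := by
      have := key φ hn.1
      rw [consistent_iff, not_not] at this
      exact csq_deduction this
    have h2 : Csq Ax Δ ((φ.neg).imp Form.fls) := by
      have := key φ.neg hn.2
      rw [consistent_iff, not_not] at this
      exact csq_deduction this
    have : Csq Ax Δ Form.fls := csq_mp h2 h1
    exact (consistent_iff.mp hΔmem) this

/-! ### Boxed conjunctions -/

lemma mcs_box_mp {Γ : Set (Form α P)} (hm : MaximalConsistent Ax Γ) {i : α} {p q : Form α P}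
    (h1 : Form.box i (p.imp q) ∈ Γ) (h2 : Form.box i p ∈ Γ) : Form.box i q ∈ Γ := by
  have hk := mcs_mem_of_prf hm (Prf.axK (Ax := Ax) (i := i) (p := p) (q := q))
  exact mcs_mp hm hk ((mcs_con_mem_iff hm).mpr ⟨h1, h2⟩)

lemma mcs_box_conj {Γ : Set (Form α P)} (hm : MaximalConsistent Ax Γ) {i : α}
    {l : List (Form α P)} (hl : ∀ q ∈ l, Form.box i q ∈ Γ) :
    Form.box i (conj l) ∈ Γ := by
  induction l with
  | nil =>
    have t : Tautology ((conj ([] : List (Form α P)))) := by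
      intro g hv; simp [beval_conj_true]
    exact mcs_mem_of_prf hm (Prf.nec (Prf.taut t))
  | cons q l ih =>
    have hq : Form.box i q ∈ Γ := hl q List.mem_cons_self
    have hc : Form.box i (conj l) ∈ Γ := ih (fun r hr => hl r (List.mem_cons_of_mem _ hr))
    have t : Tautology ((q.imp ((conj l).imp (conj (q :: l)))) : Form α P) := by
      intro g hv
      simp only [beval_imp_true, beval_conj_true, List.mem_cons]
      rintro h1 h2 x (rfl | hx)
      · exact h1
      · exact h2 x hx
    have hb : Form.box i (q.imp ((conj l).imp (conj (q :: l)))) ∈ Γ :=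
      mcs_mem_of_prf hm (Prf.nec (Prf.taut t))
    exact mcs_box_mp hm (mcs_box_mp hm hb hq) hc

/-! ### Canonical model -/

variable (Ax) in
/-- Worlds of the canonical model. -/
def CanonW (α P : Type) (Ax : Form α P → Prop) : Type :=
  {Γ : Set (Form α P) // MaximalConsistent Ax Γ}

/-- The canonical model. -/
def canonM (α P : Type) (Ax : Form α P → Prop) : Kripke α P (CanonW α P Ax) where
  val Γ x := Form.var x ∈ Γ.1
  rel i Γ Δ := ∀ p : Form α P, Form.box i p ∈ Γ.1 → p ∈ Δ.1

lemma truth_lemma (Ax : Form α P → Prop) (p : Form α P) :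
    ∀ Γ : CanonW α P Ax, (sat (canonM α P Ax) Γ p ↔ p ∈ Γ.1) := by
  induction p with
  | fls => intro Γ; simpa [sat] using fun h => mcs_fls_not_mem Γ.2 h
  | var x => intro Γ; simp [sat, canonM]
  | dis p q ihp ihq =>
    intro Γ; simp only [sat, ihp, ihq, mcs_dis_mem_iff Γ.2]
  | con p q ihp ihq =>
    intro Γ; simp only [sat, ihp, ihq, mcs_con_mem_iff Γ.2]
  | imp p q ihp ihq =>
    intro Γ; simp only [sat, ihp, ihq, mcs_imp_mem_iff Γ.2]
  | box i p ihp =>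
    intro Γ
    constructor
    · intro hs
      by_contra hn
      -- the set of boxed consequences together with ¬p is consistent
      set X : Set (Form α P) := {q | Form.box i q ∈ Γ.1} ∪ {p.neg} with hX
      have hcons : Consistent Ax X := by
        rw [consistent_iff]
        rintro ⟨l, hl, hp⟩
        set l' := l.filter (fun x => decide (x ≠ p.neg)) with hl'
        have hl'mem : ∀ ψ ∈ l', Form.box i ψ ∈ Γ.1 := by
          intro ψ hψ
          have := List.mem_filter.mp hψ
          rcases hl ψ this.1 with h | h
          · exact h
          · exact absurd h (by simpa using this.2)
        have t : Tautology ((((conj l).imp Form.fls).imp ((conj l').imp p)) : Form α P) := by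
          intro g hv
          simp only [beval_imp_true, beval_conj_true, beval_fls_true]
          intro ha hb
          by_cases hp' : beval g hv p = true
          · exact hp'
          · exfalso
            refine ha (fun x hx => ?_)
            by_cases hxp : x = p.neg
            · subst hxp
              simp only [Form.neg, beval_imp_true, beval_fls_true]
              tauto
            · exact hb x (List.mem_filter.mpr ⟨hx, by simpa using hxp⟩)
        have hprf : Prf Ax ((conj l').imp p) := Prf.mp (Prf.taut t) hp
        have hboxc : Form.box i (conj l') ∈ Γ.1 := mcs_box_conj Γ.2 hl'mem
        have hbimp : Form.box i ((conj l').imp p) ∈ Γ.1 :=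
          mcs_mem_of_prf Γ.2 (Prf.nec hprf)
        exact hn (mcs_box_mp Γ.2 hbimp hboxc)
      obtain ⟨Δ, hXΔ, hΔ⟩ := lindenbaum hcons
      have hrel : (canonM α P Ax).rel i Γ ⟨Δ, hΔ⟩ := by
        intro q hq
        exact hXΔ (Or.inl hq)
      have hpΔ : sat (canonM α P Ax) (⟨Δ, hΔ⟩ : CanonW α P Ax) p := hs _ hrel
      have : p ∈ Δ := (ihp _).mp hpΔ
      exact mcs_not_both hΔ this (hXΔ (Or.inr rfl))
    · intro hmem Δ hrel
      exact (ihp Δ).mpr (hrel p hmem)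

end Aux

section S42

open Classical

variable {α P : Type}

lemma canon_refl : ReflexiveRel (canonM α P AxS42).rel := by
  intro i Γ p hp
  have hT : Prf (AxS42 : Form α P → Prop) ((Form.box i p).imp p) :=
    Prf.ax (Or.inl ⟨i, p, rfl⟩)
  exact mcs_mp Γ.2 (mcs_mem_of_prf Γ.2 hT) hp

lemma canon_trans : TransitiveRel (canonM α P AxS42).rel := by
  intro i Γ Δ Θ h1 h2 p hp
  have h4 : Prf (AxS42 : Form α P → Prop)
      ((Form.box i p).imp (Form.box i (Form.box i p))) :=
    Prf.ax (Or.inr (Or.inl ⟨i, p, rfl⟩))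
  have : Form.box i (Form.box i p) ∈ Γ.1 := mcs_mp Γ.2 (mcs_mem_of_prf Γ.2 h4) hp
  exact h2 p (h1 _ this)

lemma canon_directed : WeaklyDirected (canonM α P AxS42).rel := by
  intro i Γ w u hw hu
  set X : Set (Form α P) :=
    {p | Form.box i p ∈ w.1} ∪ {q | Form.box i q ∈ u.1} with hX
  have hcons : Consistent AxS42 X := by
    rw [consistent_iff]
    rintro ⟨l, hl, hp⟩
    set l1 := l.filter (fun x => decide (Form.box i x ∈ w.1)) with hl1
    set l2 := l.filter (fun x => decide (Form.box i x ∉ w.1)) with hl2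
    have hl1mem : ∀ ψ ∈ l1, Form.box i ψ ∈ w.1 := by
      intro ψ hψ
      have := List.mem_filter.mp hψ
      simpa using this.2
    have hl2mem : ∀ ψ ∈ l2, Form.box i ψ ∈ u.1 := by
      intro ψ hψ
      have h2 := List.mem_filter.mp hψ
      have hnw : Form.box i ψ ∉ w.1 := by simpa using h2.2
      rcases hl ψ h2.1 with h | h
      · exact absurd h hnw
      · exact h
    set A : Form α P := conj l1 with hA
    set B : Form α P := conj l2 with hB
    -- ⊢ B → ¬A
    have t : Tautology ((((conj l).imp Form.fls).imp (B.imp A.neg)) : Form α P) := by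
      intro g hv
      simp only [hA, hB, Form.neg, beval_imp_true, beval_conj_true, beval_fls_true]
      intro ha hb hc
      refine ha (fun x hx => ?_)
      by_cases hxw : Form.box i x ∈ w.1
      · exact hc x (List.mem_filter.mpr ⟨hx, by simpa using hxw⟩)
      · exact hb x (List.mem_filter.mpr ⟨hx, by simpa using hxw⟩)
    have hBA : Prf (AxS42 : Form α P → Prop) (B.imp A.neg) := Prf.mp (Prf.taut t) hp
    -- box A ∈ w, box B ∈ u
    have hboxA : Form.box i A ∈ w.1 := mcs_box_conj w.2 hl1mem
    have hboxB : Form.box i B ∈ u.1 := mcs_box_conj u.2 hl2mem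
    -- box A.neg ∈ u
    have hboxAneg : Form.box i A.neg ∈ u.1 :=
      mcs_box_mp u.2 (mcs_mem_of_prf u.2 (Prf.nec hBA)) hboxB
    -- ¬ box ¬ box A ∈ Γ
    have hdia : (Form.box i (Form.box i A).neg).neg ∈ Γ.1 := by
      rw [mcs_neg_mem_iff Γ.2]
      intro hmem
      exact mcs_not_both w.2 hboxA (hw _ hmem)
    -- axiom .2
    have h2 : Prf (AxS42 : Form α P → Prop)
        (((Form.box i (Form.box i A).neg).neg).imp
          (Form.box i (Form.box i A.neg).neg)) :=
      Prf.ax (Or.inr (Or.inr ⟨i, A, rfl⟩))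
    have hΓ : Form.box i (Form.box i A.neg).neg ∈ Γ.1 :=
      mcs_mp Γ.2 (mcs_mem_of_prf Γ.2 h2) hdia
    have hu' : (Form.box i A.neg).neg ∈ u.1 := hu _ hΓ
    exact mcs_not_both u.2 hboxAneg hu'
  obtain ⟨Δ, hXΔ, hΔ⟩ := lindenbaum hcons
  refine ⟨⟨Δ, hΔ⟩, ?_, ?_⟩
  · intro p hp; exact hXΔ (Or.inl hp)
  · intro p hp; exact hXΔ (Or.inr hp)

end S42
/-- Completeness of S4.2: every formula valid in all Kripke models
based on weakly directed preorders is a theorem of S4.2 (propositional symbols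
and agent labels countable). -/
theorem completeness_S42 {α P : Type} [Countable α] [Countable P]
    (φ : Form α P)
    (h : ∀ (W : Type) (M : Kripke α P W), Nonempty W →
         ReflexiveRel M.rel → TransitiveRel M.rel → WeaklyDirected M.rel →
         ∀ w : W, sat M w φ) :
    Prf AxS42 φ := by
  by_contra hn
  have hcons : Consistent AxS42 ({φ.neg} : Set (Form α P)) := by
    rw [consistent_iff]
    rintro ⟨l, hl, hp⟩
    have t : Tautology ((((conj l).imp Form.fls).imp φ) : Form α P) := by
      intro g hv
      simp only [beval_imp_true, beval_conj_true, beval_fls_true]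
      intro ha
      by_cases hφ : beval g hv φ = true
      · exact hφ
      · exfalso
        refine ha (fun x hx => ?_)
        have := hl x hx
        simp only [Set.mem_singleton_iff] at this
        subst this
        simp only [Form.neg, beval_imp_true, beval_fls_true]
        tauto
    exact hn (Prf.mp (Prf.taut t) hp)
  obtain ⟨Δ, hΔsub, hΔ⟩ := lindenbaum hcons
  have hsat := h (CanonW α P AxS42) (canonM α P AxS42) ⟨⟨Δ, hΔ⟩⟩
      canon_refl canon_trans canon_directed ⟨Δ, hΔ⟩
  have hφΔ : φ ∈ Δ := (truth_lemma AxS42 φ ⟨Δ, hΔ⟩).mp hsat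
  exact mcs_not_both hΔ hφΔ (hΔsub rfl)
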